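/- Let u, v ∈ 𝒜_n^* be highest-weight quasi-ribbon words. If wt(u) = wt(v), then u = v. -/

import Mathlib

/-!
Common setup: words over the alphabet `𝒜_n = {1,…,n}` (modelled as `List ℕ`),
quasi-Kashiwara operators, the quasi-crystal graph, Kashiwara operators,
quasi-ribbon words, and the hypoplactic congruence.
-/

namespace HypoCrystal

noncomputable section
open scoped Classical

/-- `u` is a word over the alphabet `𝒜_n = {1,…,n}`. -/
def IsWord (n : ℕ) (u : List ℕ) : Prop := ∀ a ∈ u, 1 ≤ a ∧ a ≤ n

/-- `u` has an `i`-inversion: some letter `i+1` occurs strictly to the left of some letter `i`. -/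
def HasInv (i : ℕ) (u : List ℕ) : Prop :=
  ∃ v w x : List ℕ, u = v ++ (i + 1) :: w ++ i :: x

/-- Replace the first (leftmost) occurrence of `a` by `b`, if any; otherwise `none`. -/
def replaceFirst (a b : ℕ) : List ℕ → Option (List ℕ)
  | [] => none
  | x :: xs => if x = a then some (b :: xs) else (replaceFirst a b xs).map (x :: ·)

/-- The quasi-Kashiwara raising operator `e_i` (partial map, `none` = undefined):
if `u` has an `i`-inversion it is undefined; otherwise it replaces the leftmost
letter `i+1` by `i` (undefined if there is no letter `i+1`). -/
def qe (i : ℕ) (u : List ℕ) : Option (List ℕ) :=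
  if HasInv i u then none else replaceFirst (i + 1) i u

/-- The quasi-Kashiwara lowering operator `f_i` (partial map, `none` = undefined):
if `u` has an `i`-inversion it is undefined; otherwise it replaces the rightmost
letter `i` by `i+1` (undefined if there is no letter `i`). -/
def qf (i : ℕ) (u : List ℕ) : Option (List ℕ) :=
  if HasInv i u then none else (replaceFirst i (i + 1) u.reverse).map List.reverse

/-- Weight of a word: `wt u a` is the number of occurrences of the letter `a` in `u`. -/
def wt (u : List ℕ) : ℕ → ℕ := fun a => u.count a

/-- There is an edge labelled `i` from `u` to `v` in the quasi-crystal graph `Γ(hypo_n)`. -/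
def Edge (n i : ℕ) (u v : List ℕ) : Prop := 1 ≤ i ∧ i < n ∧ qf i u = some v

/-- `u` and `v` are adjacent (in the underlying undirected graph) in `Γ(hypo_n)`. -/
def Adj (n : ℕ) (u v : List ℕ) : Prop := ∃ i, Edge n i u v ∨ Edge n i v u

/-- `v` lies in the connected component `Γ(hypo_n, u)` of `u` in the quasi-crystal graph. -/
def SameComp (n : ℕ) : List ℕ → List ℕ → Prop := Relation.ReflTransGen (Adj n)

/-- `u` is a highest-weight word: no raising operator `e_i` is defined on `u`. -/
def HighestWeight (n : ℕ) (u : List ℕ) : Prop := ∀ i, 1 ≤ i → i < n → qe i u = none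

/-- `θ` is a quasi-crystal isomorphism from the component of `u` onto the component of `v`:
a weight-preserving bijection preserving labelled edges in both directions. -/
def IsQCIso (n : ℕ) (u v : List ℕ) (θ : List ℕ → List ℕ) : Prop :=
  Set.BijOn θ {x | SameComp n u x} {y | SameComp n v y} ∧
  (∀ x, SameComp n u x → wt (θ x) = wt x) ∧
  (∀ x y, SameComp n u x → SameComp n u y → ∀ i, (Edge n i x y ↔ Edge n i (θ x) (θ y)))

/-- `u ∼ v`: there is a quasi-crystal isomorphism between the components of `u` and `v`
taking `u` to `v`. -/
def Sim (n : ℕ) (u v : List ℕ) : Prop :=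
  ∃ θ : List ℕ → List ℕ, IsQCIso n u v θ ∧ θ u = v

/-- The standardization of `u`: position `k` receives the rank (starting at 1) of the
pair `(u_k, k)` among all pairs `(u_l, l)` ordered lexicographically. -/
def std (u : List ℕ) : List ℕ :=
  (List.range u.length).map fun k =>
    1 + ((List.range u.length).filter fun l =>
      u.getD l 0 < u.getD k 0 ∨ (u.getD l 0 = u.getD k 0 ∧ l < k)).length

/-- The maximal strictly decreasing factors of a word (the columns of its
quasi-ribbon tabloid, each read bottom-to-top). -/
def decFactors : List ℕ → List (List ℕ)
  | [] => []
  | a :: rest =>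
    match decFactors rest with
    | (b :: f) :: fs => if b < a then (a :: b :: f) :: fs else [a] :: (b :: f) :: fs
    | l => [a] :: l

/-- `w` is a quasi-ribbon word: its quasi-ribbon tabloid is a quasi-ribbon tableau,
i.e. the bottom entry of each column is ≤ the top entry of the next column. -/
def IsQRWord (w : List ℕ) : Prop :=
  (decFactors w).Chain' fun c d => c.headD 0 ≤ d.getLastD 0

/-- Row lengths (top to bottom) of the ribbon diagram whose column heights
(left to right) are given. -/
def rowLengths : List ℕ → List ℕ
  | [] => []
  | [d] => List.replicate d 1
  | d :: e :: rest =>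
    List.replicate (d - 1) 1 ++
      (match rowLengths (e :: rest) with
       | [] => [1]
       | r :: rs => (r + 1) :: rs)

/-- The shape (as a composition, listed top row first) of the quasi-ribbon tabloid of `w`. -/
def shape (w : List ℕ) : List ℕ := rowLengths ((decFactors w).map List.length)

/-- Columns of the quasi-ribbon tableau of shape `α` whose `j`-th row consists
entirely of symbols `j`, where rows are labelled starting from `j₀`. -/
def hwCols : List ℕ → ℕ → List (List ℕ)
  | [], _ => []
  | [a], j => List.replicate a [j]
  | a :: b :: rest, j =>
    List.replicate (a - 1) [j] ++
      (match hwCols (b :: rest) (j + 1) with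
       | [] => [[j]]
       | c :: cs => (c ++ [j]) :: cs)

/-- The column reading of the quasi-ribbon tableau of shape `α` whose `j`-th row
consists entirely of symbols `j`. -/
def hwQR (α : List ℕ) : List ℕ := (hwCols α 1).flatten

/-- The defining relations `R_hypo` of the hypoplactic monoid of rank `n`. -/
inductive HypoRel (n : ℕ) : List ℕ → List ℕ → Prop
  | knuth1 {a b c : ℕ} : 1 ≤ a → a ≤ b → b < c → c ≤ n → HypoRel n [a, c, b] [c, a, b]
  | knuth2 {a b c : ℕ} : 1 ≤ a → a < b → b ≤ c → c ≤ n → HypoRel n [b, a, c] [b, c, a]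
  | quasi1 {a b c d : ℕ} : 1 ≤ a → a ≤ b → b < c → c ≤ d → d ≤ n →
      HypoRel n [c, a, d, b] [a, c, b, d]
  | quasi2 {a b c d : ℕ} : 1 ≤ a → a < b → b ≤ c → c < d → d ≤ n →
      HypoRel n [b, d, a, c] [d, b, c, a]

/-- The hypoplactic congruence `≡_hypo`: the congruence on the free monoid generated
by the relations `R_hypo`. -/
inductive HypoCong (n : ℕ) : List ℕ → List ℕ → Prop
  | of {u v} : HypoRel n u v → HypoCong n u v
  | refl (u) : HypoCong n u u
  | symm {u v} : HypoCong n u v → HypoCong n v u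
  | trans {u v w} : HypoCong n u v → HypoCong n v w → HypoCong n u w
  | append {u v u' v'} : HypoCong n u v → HypoCong n u' v' →
      HypoCong n (u ++ u') (v ++ v')

/-- The signature word of `u` for index `i`: each letter `i` becomes `(position, true)`
(that is, `+`) and each letter `i+1` becomes `(position, false)` (that is, `−`). -/
def signWord (i : ℕ) (u : List ℕ) : List (ℕ × Bool) :=
  ((List.range u.length).zip u).filterMap fun pa =>
    if pa.2 = i then some (pa.1, true)
    else if pa.2 = i + 1 then some (pa.1, false) else none

/-- Iteratively delete factors `−+` from a signature word, producing the reduced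
word `+^p −^q`. -/
def reduce : List (ℕ × Bool) → List (ℕ × Bool)
  | [] => []
  | x :: rest =>
    match reduce rest with
    | y :: rest' => if x.2 = false ∧ y.2 = true then rest' else x :: y :: rest'
    | [] => [x]

/-- The Kashiwara raising operator `ẽ_i`, computed by the signature rule: change to `i`
the letter `i+1` corresponding to the leftmost `−` of the reduced signature word. -/
def KE (i : ℕ) (u : List ℕ) : Option (List ℕ) :=
  (((reduce (signWord i u)).filter fun x => !x.2).head?).map fun x => u.set x.1 i

/-- The Kashiwara lowering operator `f̃_i`, computed by the signature rule: change to `i+1`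
the letter `i` corresponding to the rightmost `+` of the reduced signature word. -/
def KF (i : ℕ) (u : List ℕ) : Option (List ℕ) :=
  (((reduce (signWord i u)).filter fun x => x.2).getLast?).map fun x => u.set x.1 (i + 1)

/-- The Schützenberger involution on `𝒜_n^*`: reverse the word and replace each
letter `a` by `n − a + 1`. -/
def sharp (n : ℕ) (u : List ℕ) : List ℕ := u.reverse.map fun a => n + 1 - a

/-- The largest letter occurring in `u` (0 for the empty word). -/
def maxLetter (u : List ℕ) : ℕ := u.foldr max 0

/-- `β` is coarser than `α` (`β ⪯ α`): they have the same weight and every proper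
partial sum of `β` is a proper partial sum of `α`. -/
def Coarser (β α : List ℕ) : Prop :=
  β.sum = α.sum ∧ ∀ p < β.length, ∃ m < α.length, (β.take p).sum = (α.take m).sum

end
end HypoCrystal

/-!
Quasi-ribbon words satisfy `InversionsBoundBetween`: if `x` occurs before a smaller `y`, every
letter in between lies strictly between `y` and `x`. Induct on the alphabet `{1, …, n + 1}`.
If `u` contains `n + 1`, then `e_n u` is undefined only because `u` has an `n`-inversion, and the
property forces `u = A (n+1) n S (n+1)^k` with `n + 1 ∉ A, S` and `n ∉ S`. Deleting every
`n + 1` leaves a highest-weight word `A n S` over `{1, …, n}`, fixed by the weight by induction;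
`A` and `S` are the parts before and after its last `n`, and `k` is read off the weight.
-/

namespace HypoCrystal

open List

lemma decFactors_cons (a : ℕ) (w : List ℕ) :
    decFactors (a :: w) = [a] :: decFactors w ∨
      ∃ b f fs, decFactors w = (b :: f) :: fs ∧ b < a ∧
        decFactors (a :: w) = (a :: b :: f) :: fs := by
  rw [decFactors]
  split
  next b f fs h =>
    split_ifs with hba
    · exact Or.inr ⟨b, f, fs, h, hba, rfl⟩
    · exact Or.inl (by rw [h])
  next => exact Or.inl rfl

lemma flatten_decFactors (w : List ℕ) : (decFactors w).flatten = w := by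
  induction w with
  | nil => rfl
  | cons a w ih =>
    rcases decFactors_cons a w with h | ⟨b, f, fs, hw, -, h⟩
    · simp [h, ih]
    · rw [hw] at ih
      rw [h, ← ih]
      simp

lemma exists_decFactors_cons_eq (a : ℕ) (w : List ℕ) :
    ∃ f fs, decFactors (a :: w) = (a :: f) :: fs := by
  rcases decFactors_cons a w with h | ⟨b, f, fs, -, -, h⟩
  exacts [⟨[], _, h⟩, ⟨b :: f, fs, h⟩]

lemma le_headD_of_mem {l : List ℕ} (hl : l.Pairwise (· > ·)) {z : ℕ} (hz : z ∈ l) :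
    z ≤ l.headD 0 := by
  cases l with
  | nil => simp at hz
  | cons a t =>
    rcases mem_cons.1 hz with rfl | hz
    exacts [le_rfl, (rel_of_pairwise_cons hl hz).le]

lemma getLastD_le_of_mem {l : List ℕ} (hl : l.Pairwise (· > ·)) {z : ℕ} (hz : z ∈ l) :
    l.getLastD 0 ≤ z := by
  have hne : l ≠ [] := ne_nil_of_mem hz
  rw [← dropLast_append_getLast hne, pairwise_append] at hl
  rw [← dropLast_append_getLast hne, mem_append, mem_singleton] at hz
  rw [getLastD_eq_getLast?, getLast?_eq_some_getLast hne, Option.getD_some]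
  rcases hz with hz | rfl
  exacts [(hl.2.2 z hz _ (mem_singleton_self _)).le, le_rfl]

lemma getLastD_le_headD {l : List ℕ} (hl : l.Pairwise (· > ·)) : l.getLastD 0 ≤ l.headD 0 := by
  cases l with
  | nil => rfl
  | cons a t => exact getLastD_le_of_mem hl mem_cons_self

lemma pairwise_of_mem_decFactors {w c : List ℕ} (hc : c ∈ decFactors w) :
    c.Pairwise (· > ·) := by
  induction w generalizing c with
  | nil => simp [decFactors] at hc
  | cons a w ih =>
    rcases decFactors_cons a w with h | ⟨b, f, fs, hw, hba, h⟩ <;> rw [h, mem_cons] at hc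
    · rcases hc with rfl | hc
      exacts [pairwise_singleton _ _, ih hc]
    · rcases hc with rfl | hc
      · have hbf : (b :: f).Pairwise (· > ·) := ih (by simp [hw])
        exact pairwise_cons.2 ⟨fun z hz => (le_headD_of_mem hbf hz).trans_lt hba, hbf⟩
      · exact ih (by simp [hw, hc])

lemma headD_le_of_mem_flatten {c : List ℕ} {ds : List (List ℕ)}
    (hch : (c :: ds).IsChain fun c d => c.headD 0 ≤ d.getLastD 0)
    (hds : ∀ d ∈ ds, d.Pairwise (· > ·)) {z : ℕ} (hz : z ∈ ds.flatten) : c.headD 0 ≤ z := by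
  induction ds generalizing c with
  | nil => simp at hz
  | cons d ds ih =>
    rw [isChain_cons_cons] at hch
    rw [flatten_cons, mem_append] at hz
    have hd := hds d mem_cons_self
    rcases hz with hz | hz
    · exact hch.1.trans (getLastD_le_of_mem hd hz)
    · calc c.headD 0 ≤ d.getLastD 0 := hch.1
        _ ≤ d.headD 0 := getLastD_le_headD hd
        _ ≤ z := ih hch.2 (fun d' hd' => hds d' (mem_cons_of_mem _ hd')) hz

lemma isQRWord_iff {w : List ℕ} :
    IsQRWord w ↔ (decFactors w).IsChain fun c d => c.headD 0 ≤ d.getLastD 0 :=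
  Iff.rfl

lemma IsQRWord.tail {a : ℕ} {w : List ℕ} (h : IsQRWord (a :: w)) : IsQRWord w := by
  rw [isQRWord_iff] at h ⊢
  rcases decFactors_cons a w with hd | ⟨b, f, fs, hw, hba, hd⟩ <;> rw [hd] at h
  · exact h.tail
  · rw [hw]
    cases fs with
    | nil => exact isChain_singleton _
    | cons d fs =>
      rw [isChain_cons_cons] at h ⊢
      exact ⟨hba.le.trans h.1, h.2⟩

lemma IsQRWord.exists_decreasing_prefix {a : ℕ} {w : List ℕ} (h : IsQRWord (a :: w)) :
    ∃ f g, w = f ++ g ∧ (a :: f).Pairwise (· > ·) ∧ ∀ z ∈ g, a ≤ z := by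
  obtain ⟨f, fs, hd⟩ := exists_decFactors_cons_eq a w
  have hw : w = f ++ fs.flatten := by
    simpa [hd] using (flatten_decFactors (a :: w)).symm
  rw [isQRWord_iff, hd] at h
  refine ⟨f, fs.flatten, hw, pairwise_of_mem_decFactors (hd ▸ mem_cons_self), fun z hz => ?_⟩
  exact headD_le_of_mem_flatten h
    (fun d hd' => pairwise_of_mem_decFactors (hd ▸ mem_cons_of_mem _ hd')) hz

/-- Quasi-ribbon words have this property, and unlike quasi-ribbonness it passes to subwords. -/
def InversionsBoundBetween (w : List ℕ) : Prop :=
  ∀ x b y : ℕ, [x, b, y] <+ w → y < x → y < b ∧ b < x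

lemma InversionsBoundBetween.sublist {v w : List ℕ} (h : InversionsBoundBetween w)
    (hvw : v <+ w) : InversionsBoundBetween v :=
  fun x b y hs => h x b y (hs.trans hvw)

lemma sublist_left_of_sublist_append_of_not_mem {b y : ℕ} {f g : List ℕ}
    (h : [b, y] <+ f ++ g) (hy : y ∉ g) : [b, y] <+ f := by
  obtain ⟨l₁, l₂, heq, h₁, h₂⟩ := sublist_append_iff.1 h
  have hy₂ : y ∉ l₂ := fun hy₂ => hy (h₂.subset hy₂)
  rcases l₁ with _ | ⟨_, _ | ⟨_, _ | _⟩⟩ <;> grind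

lemma IsQRWord.inversionsBoundBetween {w : List ℕ} (h : IsQRWord w) :
    InversionsBoundBetween w := by
  induction w with
  | nil => intro x b y hs; simp at hs
  | cons a w ih =>
    intro x b y hs hyx
    rcases sublist_cons_iff.1 hs with hs | ⟨r, hr, hs⟩
    · exact ih h.tail x b y hs hyx
    · obtain ⟨rfl, rfl⟩ := cons.inj hr
      obtain ⟨f, g, rfl, hf, hg⟩ := h.exists_decreasing_prefix
      have hbyf : [b, y] <+ f :=
        sublist_left_of_sublist_append_of_not_mem hs fun hy => (hg y hy).not_gt hyx
      obtain ⟨hxb, hby⟩ := pairwise_cons.1 (hf.sublist (hbyf.cons_cons x))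
      exact ⟨rel_of_pairwise_cons hby mem_cons_self, hxb b mem_cons_self⟩

lemma replaceFirst_eq_none_iff {a b : ℕ} {l : List ℕ} : replaceFirst a b l = none ↔ a ∉ l := by
  induction l with
  | nil => simp [replaceFirst]
  | cons x l ih =>
    by_cases hx : x = a
    · simp [replaceFirst, hx]
    · simp [replaceFirst, hx, ih, Ne.symm hx]

lemma qe_eq_none_iff {i : ℕ} {u : List ℕ} : qe i u = none ↔ HasInv i u ∨ i + 1 ∉ u := by
  unfold qe
  split_ifs with h <;> simp [h, replaceFirst_eq_none_iff]

lemma HasInv.filter {i : ℕ} {u : List ℕ} (h : HasInv i u) {p : ℕ → Bool} (hi : p i)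
    (hi' : p (i + 1)) : HasInv i (u.filter p) := by
  obtain ⟨A, B, C, rfl⟩ := h
  exact ⟨A.filter p, B.filter p, C.filter p, by simp [filter_append, hi, hi']⟩

lemma HighestWeight.hasInv {n i : ℕ} {u : List ℕ} (h : HighestWeight n u) (hi : 1 ≤ i)
    (hin : i < n) (hmem : i + 1 ∈ u) : HasInv i u :=
  (qe_eq_none_iff.1 (h i hi hin)).resolve_right (not_not.2 hmem)

lemma HighestWeight.filter_ne_succ {n : ℕ} {u : List ℕ} (h : HighestWeight (n + 1) u) :
    HighestWeight n (u.filter (· ≠ n + 1)) := by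
  intro i hi hin
  refine qe_eq_none_iff.2 ((qe_eq_none_iff.1 (h i hi (by omega))).imp ?_ ?_)
  · exact fun hinv => hinv.filter (decide_eq_true (by omega)) (decide_eq_true (by omega))
  · exact fun hmem hmem' => hmem (mem_of_mem_filter hmem')

lemma IsWord.filter_ne_succ {n : ℕ} {u : List ℕ} (h : IsWord (n + 1) u) :
    IsWord n (u.filter (· ≠ n + 1)) := by
  intro a ha
  rw [mem_filter, decide_eq_true_iff] at ha
  have := h a ha.1
  omega

lemma exists_eq_append_replicate {α : Type*} {x : α} :
    ∀ {C : List α}, (∀ z, [x, z] <+ C → z = x) → ∃ S k, C = S ++ replicate k x ∧ x ∉ S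
  | [], _ => ⟨[], 0, rfl, not_mem_nil⟩
  | c :: C, h => by
    by_cases hc : c = x
    · subst hc
      refine ⟨[], C.length + 1, ?_, not_mem_nil⟩
      rw [nil_append, replicate_succ, ← eq_replicate_of_mem fun z hz =>
        h z ((singleton_sublist.2 hz).cons_cons c)]
    · obtain ⟨S, k, rfl, hS⟩ := exists_eq_append_replicate fun z hz => h z (hz.cons c)
      exact ⟨c :: S, k, rfl, by simp [hS, Ne.symm hc]⟩

lemma append_cons_inj_of_not_mem {α : Type*} {a : α} {A A' S S' : List α} (hS : a ∉ S)
    (hS' : a ∉ S') (h : A ++ a :: S = A' ++ a :: S') : A = A' ∧ S = S' := by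
  rcases append_eq_append_iff.1 h with ⟨c, rfl, hc⟩ | ⟨c, rfl, hc⟩ <;>
    cases c <;> simp_all

lemma HighestWeight.exists_eq_append_succ_cons_append_replicate {n : ℕ} {u : List ℕ}
    (hh : HighestWeight (n + 1) u) (hw : IsWord (n + 1) u) (hb : InversionsBoundBetween u)
    (hn : 1 ≤ n) (hx : n + 1 ∈ u) :
    ∃ A S k, u = A ++ (n + 1) :: n :: (S ++ replicate k (n + 1)) ∧
      n + 1 ∉ A ∧ n + 1 ∉ S ∧ n ∉ S := by
  obtain ⟨A, B, C, hu⟩ := hh.hasInv hn (by omega) hx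
  obtain rfl : u = A ++ (n + 1) :: (B ++ n :: C) := by simp [hu]
  have hB : B = [] := eq_nil_iff_forall_not_mem.2 fun b hbB => by
    have := hb (n + 1) b n (sublist_append_of_sublist_right (((singleton_sublist.2 hbB).append
      (singleton_sublist.2 mem_cons_self)).cons_cons _)) (by omega)
    omega
  subst hB
  have hA : n + 1 ∉ A := fun hA => by
    have := hb (n + 1) (n + 1) n ((singleton_sublist.2 hA).append (by simp)) (by omega)
    omega
  have hC : n ∉ C := fun hC => by
    have := hb (n + 1) n n (sublist_append_of_sublist_right
      (((singleton_sublist.2 hC).cons_cons _).cons_cons _)) (by omega)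
    omega
  obtain ⟨S, k, rfl, hS⟩ := exists_eq_append_replicate (x := n + 1) (C := C) fun z hz => by
    have hzu : z ∈ C := hz.subset (by simp)
    have := (hw z (by simp [hzu])).2
    by_contra hzx
    have := hb (n + 1) (n + 1) z (sublist_append_of_sublist_right
      ((hz.cons _).cons_cons _)) (by omega)
    omega
  exact ⟨A, S, k, by simp, hA, hS, fun h => hC (by simp [h])⟩

lemma filter_ne_eq_self {x : ℕ} {l : List ℕ} (h : x ∉ l) : l.filter (· ≠ x) = l :=
  filter_eq_self.2 fun _ ha => decide_eq_true (ne_of_mem_of_not_mem ha h)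

lemma filter_ne_append_cons_cons_append_replicate {x y : ℕ} {A S : List ℕ} (k : ℕ)
    (hyx : y ≠ x) (hA : x ∉ A) (hS : x ∉ S) :
    (A ++ x :: y :: (S ++ replicate k x)).filter (· ≠ x) = A ++ y :: S := by
  simp only [filter_append, filter_cons, filter_ne_eq_self hA, filter_ne_eq_self hS]
  simp [hyx]

lemma eq_of_filter_ne_succ_eq {n : ℕ} {u v : List ℕ} (hn : 1 ≤ n)
    (hhu : HighestWeight (n + 1) u) (hhv : HighestWeight (n + 1) v)
    (hu : IsWord (n + 1) u) (hv : IsWord (n + 1) v)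
    (hbu : InversionsBoundBetween u) (hbv : InversionsBoundBetween v) (hp : u ~ v)
    (hx : n + 1 ∈ u) (hf : u.filter (· ≠ n + 1) = v.filter (· ≠ n + 1)) : u = v := by
  obtain ⟨A, S, k, rfl, hA, hS, hnS⟩ :=
    hhu.exists_eq_append_succ_cons_append_replicate hu hbu hn hx
  obtain ⟨A', S', k', rfl, hA', hS', hnS'⟩ :=
    hhv.exists_eq_append_succ_cons_append_replicate hv hbv hn (hp.subset hx)
  rw [filter_ne_append_cons_cons_append_replicate k (by omega) hA hS,
    filter_ne_append_cons_cons_append_replicate k' (by omega) hA' hS'] at hf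
  obtain ⟨rfl, rfl⟩ := append_cons_inj_of_not_mem hnS hnS' hf
  obtain rfl : k = k' := by
    simpa [count_eq_zero_of_not_mem hA, count_eq_zero_of_not_mem hS,
      count_eq_zero_of_not_mem hA', count_eq_zero_of_not_mem hS'] using hp.count_eq (n + 1)
  rfl

lemma highestWeight_eq_of_perm {n : ℕ} {u v : List ℕ} (hu : IsWord n u) (hv : IsWord n v)
    (hbu : InversionsBoundBetween u) (hbv : InversionsBoundBetween v)
    (hhu : HighestWeight n u) (hhv : HighestWeight n v) (hp : u ~ v) : u = v := by
  induction n generalizing u v with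
  | zero =>
    have hnil : ∀ {w : List ℕ}, IsWord 0 w → w = [] := fun hw =>
      eq_nil_iff_forall_not_mem.2 fun a ha => by have := hw a ha; omega
    rw [hnil hu, hnil hv]
  | succ n ih =>
    have hf := ih hu.filter_ne_succ hv.filter_ne_succ (hbu.sublist filter_sublist)
      (hbv.sublist filter_sublist) hhu.filter_ne_succ hhv.filter_ne_succ (hp.filter _)
    by_cases hx : n + 1 ∈ u
    · rcases Nat.eq_zero_or_pos n with rfl | hn
      · have hu₁ : u = replicate u.length 1 :=
          eq_replicate_of_mem fun a ha => by have := hu a ha; omega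
        rw [hu₁] at hp ⊢
        exact (perm_replicate.1 hp.symm).symm
      · exact eq_of_filter_ne_succ_eq hn hhu hhv hu hv hbu hbv hp hx hf
    · have hx' : n + 1 ∉ v := fun h => hx (hp.symm.subset h)
      rwa [filter_ne_eq_self hx, filter_ne_eq_self hx'] at hf

/-- Let `u, v ∈ 𝒜_n^*` be highest-weight quasi-ribbon words.
If `wt(u) = wt(v)`, then `u = v`. -/
theorem highestWeight_quasiRibbon_eq_of_weight_eq (n : ℕ) (u v : List ℕ)
    (hu : IsWord n u) (hv : IsWord n v) (hqu : IsQRWord u) (hqv : IsQRWord v)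
    (hhu : HighestWeight n u) (hhv : HighestWeight n v)
    (hwt : wt u = wt v) : u = v :=
  highestWeight_eq_of_perm hu hv hqu.inversionsBoundBetween hqv.inversionsBoundBetween hhu hhv
    (perm_iff_count.2 fun a => congrFun hwt a)

end HypoCrystal
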